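/- arXiv:1712.02113 — 3 statements merged into one kernel-verified Lean document; each statement's English description precedes it below -/
import Mathlib

section
/- Let K be an algebraic number field with ring of integers O_K and let n ≥ 2. If v = (v₁,...,vₙ) and w = (w₁,...,wₙ) are vectors in O_Kⁿ such that the ideal of O_K generated by v₁,...,vₙ is the unit ideal and the ideal generated by w₁,...,wₙ is the unit ideal, then there exists a matrix A ∈ SL(n, O_K) with Av = w. -/
/-!
Over a Dedekind domain `R`, every unimodular vector `(a, b, t) ∈ R² × Rᵏ` lies in the
`SL(2 + k, R)`-orbit of `(1, 0, 0)`. A transvection makes `b ≠ 0`. Only finitely many primes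
contain `b`, so the Chinese remainder theorem yields `z` in the ideal spanned by `t` with
`a + z` coprime to `b`, and `z` is added to `a` by a transvection. Once `p (a + z) + q b = 1`,
the rank-one transvection `x ↦ x - (p x₀ + q x₁) (0, 0, t)` clears `t`, and a matrix in
`SL(2, R)` with first column `(a + z, b)` does the rest.
-/

open NumberField Matrix MulAction IsDedekindDomain

lemma Matrix.span_range_mulVec_le {R ι : Type*} [CommRing R] [Fintype ι] (A : Matrix ι ι R)
    (x : ι → R) : Ideal.span (Set.range (A *ᵥ x)) ≤ Ideal.span (Set.range x) := by
  rw [Ideal.span_le]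
  rintro _ ⟨i, rfl⟩
  exact Ideal.sum_mem _ fun j _ => Ideal.mul_mem_left _ _ (Ideal.subset_span ⟨j, rfl⟩)

namespace Matrix.SpecialLinearGroup

variable {R ι : Type*} [CommRing R] [Fintype ι] [DecidableEq ι]

def rankOneTransvection (u w : ι → R) (h : w ⬝ᵥ u = 0) : SpecialLinearGroup ι R :=
  ⟨1 + vecMulVec u w, by
    rw [vecMulVec_eq Unit, det_one_add_replicateCol_mul_replicateRow, h, add_zero]⟩

lemma rankOneTransvection_smul (u w : ι → R) (h : w ⬝ᵥ u = 0) (x : ι → R) :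
    rankOneTransvection u w h • x = x + (w ⬝ᵥ x) • u := by
  rw [SpecialLinearGroup.smul_def, rankOneTransvection, smul_eq_mulVec, add_mulVec, one_mulVec,
    vecMulVec_mulVec, op_smul_eq_smul]

lemma span_range_smul (g : SpecialLinearGroup ι R) (x : ι → R) :
    Ideal.span (Set.range (g • x)) = Ideal.span (Set.range x) := by
  refine le_antisymm (span_range_mulVec_le _ _) ?_
  conv_lhs => rw [← inv_smul_smul g x]
  exact span_range_mulVec_le _ _

lemma exists_smul_apply_ne_zero {x : ι → R} (hx : x ≠ 0) (i : ι) :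
    ∃ g : SpecialLinearGroup ι R, (g • x) i ≠ 0 := by
  by_cases hxi : x i = 0
  · obtain ⟨j, hxj⟩ := Function.ne_iff.1 hx
    have hji : j ≠ i := by rintro rfl; exact hxj hxi
    refine ⟨rankOneTransvection (Pi.single i 1) (Pi.single j 1) (by simp [hji]), ?_⟩
    simpa [rankOneTransvection_smul, hxi] using hxj
  · exact ⟨1, by simpa using hxi⟩

end Matrix.SpecialLinearGroup

lemma exists_mem_add_notMem_of_sup_eq_top {R : Type*} [CommRing R] {a b : R} {J P : Ideal R}
    (hP : P ≠ ⊤) (hb : b ∈ P) (h : Ideal.span {a, b} ⊔ J = ⊤) : ∃ r ∈ J, a + r ∉ P := by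
  by_cases ha : a ∈ P
  · have hJ : ¬J ≤ P := fun hJP => hP <| eq_top_iff.2 <| h ▸ sup_le
      (Ideal.span_le.2 <| by simp [Set.insert_subset_iff, ha, hb]) hJP
    obtain ⟨r, hrJ, hrP⟩ := Set.not_subset.1 hJ
    exact ⟨r, hrJ, fun har => hrP (by simpa using P.sub_mem har ha)⟩
  · exact ⟨0, J.zero_mem, by simpa using ha⟩

section DedekindDomain

variable {R : Type*} [CommRing R] [IsDedekindDomain R]

lemma exists_mem_forall_sub_mem_of_mem {J : Ideal R} (S : Finset (HeightOneSpectrum R))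
    (r : HeightOneSpectrum R → R) (hr : ∀ P ∈ S, r P ∈ J) :
    ∃ z ∈ J, ∀ P ∈ S, z - r P ∈ P.asIdeal := by
  classical
  -- The witness is `∑ e P * r P` with `e P` congruent to `1` modulo `P` and to `0` modulo the
  -- other primes of `S`.
  have he : ∀ P : HeightOneSpectrum R,
      ∃ e : R, ∀ Q ∈ S, e - (if Q = P then 1 else 0) ∈ Q.asIdeal := by
    intro P
    obtain ⟨e, he⟩ := exists_forall_sub_mem_ideal (s := S) HeightOneSpectrum.asIdeal (fun _ => 1)
      (fun Q _ => Ideal.prime_of_isPrime Q.ne_bot Q.isPrime)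
      (fun Q _ Q' _ hne he => hne (HeightOneSpectrum.ext he)) (fun Q => if Q.1 = P then 1 else 0)
    exact ⟨e, fun Q hQ => by simpa using he Q hQ⟩
  choose e he using he
  refine ⟨∑ Q ∈ S, e Q * r Q, Ideal.sum_mem _ fun Q hQ => J.mul_mem_left _ (hr Q hQ), ?_⟩
  intro P hPS
  have hsub : ∑ Q ∈ S, e Q * r Q - r P = ∑ Q ∈ S, (e Q - if P = Q then 1 else 0) * r Q := by
    simp [sub_mul, Finset.sum_sub_distrib, hPS]
  exact hsub ▸ Ideal.sum_mem _ fun Q _ => P.asIdeal.mul_mem_right _ (he Q P hPS)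

lemma exists_mem_isCoprime_add {a b : R} (hb : b ≠ 0) {J : Ideal R}
    (h : Ideal.span {a, b} ⊔ J = ⊤) : ∃ z ∈ J, IsCoprime (a + z) b := by
  have hS : {P : HeightOneSpectrum R | b ∈ P.asIdeal}.Finite := by
    simpa only [Ideal.dvd_span_singleton] using
      Ideal.finite_factors (I := Ideal.span {b}) (by simpa using hb)
  have hr (P : HeightOneSpectrum R) : ∃ r ∈ J, b ∈ P.asIdeal → a + r ∉ P.asIdeal := by
    by_cases hbP : b ∈ P.asIdeal
    · obtain ⟨r, hrJ, hr⟩ := exists_mem_add_notMem_of_sup_eq_top P.isPrime.ne_top hbP h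
      exact ⟨r, hrJ, fun _ => hr⟩
    · exact ⟨0, J.zero_mem, fun h => (hbP h).elim⟩
  choose r hrJ hr using hr
  obtain ⟨z, hzJ, hz⟩ := exists_mem_forall_sub_mem_of_mem hS.toFinset r fun P _ => hrJ P
  refine ⟨z, hzJ, ?_⟩
  rw [← Ideal.isCoprime_span_singleton_iff, Ideal.isCoprime_iff_sup_eq, ← Ideal.span_union]
  by_contra hne
  obtain ⟨M, hM, hle⟩ := Ideal.exists_le_maximal _ hne
  have hbM : b ∈ M := hle (Ideal.subset_span (Set.mem_union_right _ rfl))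
  have hazM : a + z ∈ M := hle (Ideal.subset_span (Set.mem_union_left _ rfl))
  let P : HeightOneSpectrum R := ⟨M, hM.isPrime, fun hM0 => hb (by simpa [hM0] using hbM)⟩
  refine hr P hbM ?_
  convert M.sub_mem hazM (hz P (hS.mem_toFinset.2 hbM)) using 1
  ring

end DedekindDomain

namespace Matrix.SpecialLinearGroup

variable {R κ : Type*} [CommRing R] [Fintype κ] [DecidableEq κ]

local notation "SLₖ" => SpecialLinearGroup (Fin 2 ⊕ κ) R

lemma orbit_sumElim_add_mem_span (a b : R) (t : κ → R) {z : R}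
    (hz : z ∈ Ideal.span (Set.range t)) :
    orbit SLₖ (Sum.elim ![a + z, b] t) = orbit SLₖ (Sum.elim ![a, b] t) := by
  obtain ⟨c, rfl⟩ := Ideal.mem_span_range_iff_exists_fun.1 hz
  let g : SLₖ := rankOneTransvection (Pi.single (Sum.inl 0) 1) (Sum.elim 0 c) (by simp)
  have hg : g • Sum.elim ![a, b] t = Sum.elim ![a + ∑ j, c j * t j, b] t := by
    ext (i | j)
    · fin_cases i <;> simp [g, rankOneTransvection_smul, dotProduct]
    · simp [g, rankOneTransvection_smul]
  rw [← hg, orbit_smul]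

lemma orbit_sumElim_eq_of_isCoprime {a b : R} (hab : IsCoprime a b) (t : κ → R) :
    orbit SLₖ (Sum.elim ![a, b] t) = orbit SLₖ (Sum.elim ![a, b] 0) := by
  obtain ⟨p, q, hpq⟩ := hab
  let g : SLₖ := rankOneTransvection (Sum.elim 0 (-t)) (Sum.elim ![p, q] 0) (by simp)
  have hg : g • Sum.elim ![a, b] t = Sum.elim ![a, b] 0 := by
    ext (i | j)
    · fin_cases i <;> simp [g, rankOneTransvection_smul]
    · simp [g, rankOneTransvection_smul, dotProduct, hpq]
  rw [← hg, orbit_smul]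

lemma orbit_sumElim_zero_eq_of_isCoprime {a b : R} (hab : IsCoprime a b) :
    orbit SLₖ (Sum.elim ![a, b] (0 : κ → R)) =
      orbit SLₖ (Sum.elim ![1, 0] 0 : Fin 2 ⊕ κ → R) := by
  obtain ⟨g, hg0, hg1⟩ := hab.exists_SL2_col 0
  let G : SLₖ := ⟨fromBlocks g 0 0 1, by simp⟩
  have hG : G • (Sum.elim ![1, 0] 0 : Fin 2 ⊕ κ → R) = Sum.elim ![a, b] 0 := by
    change fromBlocks (g : Matrix (Fin 2) (Fin 2) R) 0 0 1 *ᵥ _ = _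
    ext (i | j)
    · fin_cases i <;> simp [mulVec, dotProduct, hg0, hg1]
    · simp [fromBlocks_mulVec]
  rw [← hG, orbit_smul]

lemma orbit_sumElim_eq_of_span_eq_top [IsDedekindDomain R] {a b : R} (hb : b ≠ 0) {t : κ → R}
    (h : Ideal.span {a, b} ⊔ Ideal.span (Set.range t) = ⊤) :
    orbit SLₖ (Sum.elim ![a, b] t) = orbit SLₖ (Sum.elim ![1, 0] 0 : Fin 2 ⊕ κ → R) := by
  obtain ⟨z, hz, hcop⟩ := exists_mem_isCoprime_add hb h
  rw [← orbit_sumElim_add_mem_span a b t hz, orbit_sumElim_eq_of_isCoprime hcop,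
    orbit_sumElim_zero_eq_of_isCoprime hcop]

lemma orbit_eq_of_span_eq_top [IsDedekindDomain R] {x : Fin 2 ⊕ κ → R}
    (hx : Ideal.span (Set.range x) = ⊤) :
    orbit SLₖ x = orbit SLₖ (Sum.elim ![1, 0] 0 : Fin 2 ⊕ κ → R) := by
  have hx0 : x ≠ 0 := by
    rintro rfl
    exact bot_ne_top ((Ideal.span_eq_bot.2 (by simp)).symm.trans hx)
  obtain ⟨g, hg⟩ := exists_smul_apply_ne_zero hx0 (Sum.inl 1)
  have hgx :
      g • x = Sum.elim ![(g • x) (Sum.inl 0), (g • x) (Sum.inl 1)] ((g • x) ∘ Sum.inr) := by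
    ext (i | j)
    · fin_cases i <;> rfl
    · rfl
  rw [← orbit_smul g x, hgx]
  refine orbit_sumElim_eq_of_span_eq_top hg ?_
  rw [← Ideal.span_union, ← Matrix.range_cons_cons_empty, ← Set.Sum.elim_range, ← hgx,
    span_range_smul, hx]

theorem exists_smul_eq_of_span_eq_top [IsDedekindDomain R] {v w : Fin 2 ⊕ κ → R}
    (hv : Ideal.span (Set.range v) = ⊤) (hw : Ideal.span (Set.range w) = ⊤) :
    ∃ g : SLₖ, g • v = w := by
  rw [← mem_orbit_iff, orbit_eq_of_span_eq_top hv, ← orbit_eq_of_span_eq_top hw]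
  exact mem_orbit_self w

end Matrix.SpecialLinearGroup

theorem stmt5 (K : Type*) [Field K] [NumberField K] (n : ℕ) (hn : 2 ≤ n)
    (v w : Fin n → 𝓞 K)
    (hv : Ideal.span (Set.range v) = ⊤)
    (hw : Ideal.span (Set.range w) = ⊤) :
    ∃ A : Matrix.SpecialLinearGroup (Fin n) (𝓞 K),
      (A : Matrix (Fin n) (Fin n) (𝓞 K)).mulVec v = w := by
  obtain ⟨k, rfl⟩ : ∃ k, n = 2 + k := ⟨n - 2, by omega⟩
  let e : Fin 2 ⊕ Fin k ≃ Fin (2 + k) := finSumFinEquiv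
  have hspan (x : Fin (2 + k) → 𝓞 K) (hx : Ideal.span (Set.range x) = ⊤) :
      Ideal.span (Set.range (x ∘ e)) = ⊤ := by
    rwa [e.surjective.range_comp]
  obtain ⟨g, hg⟩ := SpecialLinearGroup.exists_smul_eq_of_span_eq_top (hspan v hv) (hspan w hw)
  refine ⟨⟨reindex e e g, by rw [det_reindex_self, g.2]⟩, ?_⟩
  change (g : Matrix _ _ (𝓞 K)).submatrix e.symm e.symm *ᵥ v = w
  rw [submatrix_mulVec_equiv, Equiv.symm_symm, ← smul_eq_mulVec,
    ← Matrix.SpecialLinearGroup.smul_def, hg]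
  ext i
  simp
end

section
/- Let F = (F₁,...,Fₙ) ∈ ℂ[X₁,...,Xₙ]ⁿ be a Keller map and let h ∈ ℂ[X₁,...,Xₙ] be a nonconstant polynomial. Then there exists a point x ∈ ℂⁿ with h(F₁(x),...,Fₙ(x)) = 0; in other words, the image F(ℂⁿ) meets every affine hypersurface {h = 0}. -/
/-!
A map with invertible Jacobian has algebraically independent components: if `p ∘ F = 0`, the
chain rule says that the row vector `((∂ⱼ p) ∘ F)ⱼ` times the Jacobian of `F` vanishes, so each
`(∂ⱼ p) ∘ F = 0`, and induction on the total degree makes every `∂ⱼ p` zero, hence `p` constant,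
hence `p = 0`. Consequently `h ∘ F` is a nonconstant polynomial, so not a unit, and by the weak
Nullstellensatz it has a zero `x`; then `F(x)` is a zero of `h`.
-/

open MvPolynomial

/-- A polynomial map `F = (F₁,...,Fₙ)` is a Keller map if the determinant of its
Jacobian matrix `(∂Fᵢ/∂Xⱼ)` is identically `1`. -/
def IsKeller {R : Type*} [CommRing R] {n : ℕ} (F : Fin n → MvPolynomial (Fin n) R) : Prop :=
  Matrix.det (Matrix.of fun i j => pderiv j (F i)) = 1

open Matrix

namespace MvPolynomial

variable {R σ τ : Type*}

theorem totalDegree_pderiv_le [CommSemiring R] (i : σ) (p : MvPolynomial σ R) :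
    (pderiv i p).totalDegree ≤ p.totalDegree - 1 := by
  classical
  refine Finset.sup_le fun m hm => ?_
  rw [mem_support_iff, coeff_pderiv] at hm
  have hdeg := le_totalDegree (mem_support_iff.2 (left_ne_zero_of_mul hm))
  rw [Finsupp.sum_add_index' (fun _ => rfl) (fun _ _ _ => rfl), Finsupp.sum_single_index rfl]
    at hdeg
  omega

theorem totalDegree_pderiv_lt [CommSemiring R] {i : σ} {p : MvPolynomial σ R}
    (h : pderiv i p ≠ 0) : (pderiv i p).totalDegree < p.totalDegree := by
  have hp : p.totalDegree ≠ 0 := fun h0 => h (by rw [totalDegree_eq_zero_iff_eq_C.1 h0, pderiv_C])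
  have := totalDegree_pderiv_le i p
  omega

theorem eq_C_of_forall_pderiv_eq_zero [CommRing R] [IsAddTorsionFree R] {p : MvPolynomial σ R}
    (h : ∀ i, pderiv i p = 0) : p = C (constantCoeff p) := by
  refine coe_inj.1 (MvPowerSeries.pderiv.ext (fun i => ?_) ?_)
  · rw [MvPowerSeries.pderiv_coe, MvPowerSeries.pderiv_coe, h, pderiv_C]
  · rw [coe_C, MvPowerSeries.constantCoeff_C, ← MvPowerSeries.coeff_zero_eq_constantCoeff_apply,
      coeff_coe, constantCoeff_eq]

theorem pderiv_aeval [CommSemiring R] [Fintype σ] (F : σ → MvPolynomial τ R)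
    (p : MvPolynomial σ R) (i : τ) :
    pderiv i (aeval F p) = ∑ j, aeval F (pderiv j p) * pderiv i (F j) := by
  classical
  induction p using MvPolynomial.induction_on with
  | C a => simp
  | add p q hp hq => simp only [map_add, hp, hq, add_mul, Finset.sum_add_distrib]
  | mul_X p k hp =>
    simp only [map_mul, aeval_X, Derivation.leibniz, pderiv_X, hp, smul_eq_mul, map_add,
      Finset.sum_add_distrib, add_mul]
    simp only [Pi.single_apply, apply_ite (aeval F), map_one, map_zero, mul_ite, ite_mul, one_mul,
      zero_mul, mul_zero, Finset.sum_ite_eq, Finset.mem_univ, if_true, Finset.mul_sum, mul_assoc]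

noncomputable def jacobian [CommSemiring R] [Fintype σ] (F : σ → MvPolynomial σ R) :
    Matrix σ σ (MvPolynomial σ R) :=
  Matrix.of fun i j => pderiv j (F i)

theorem aeval_pderiv_eq_zero_of_isUnit_det_jacobian [CommRing R] [Fintype σ] [DecidableEq σ]
    {F : σ → MvPolynomial σ R} (hF : IsUnit (jacobian F).det) {p : MvPolynomial σ R}
    (hp : aeval F p = 0) (j : σ) : aeval F (pderiv j p) = 0 := by
  have hvec : (fun j => aeval F (pderiv j p)) ᵥ* jacobian F = 0 ᵥ* jacobian F := by
    funext i
    have hchain := pderiv_aeval F p i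
    rw [hp, map_zero] at hchain
    simpa [vecMul, dotProduct, jacobian] using hchain.symm
  exact congrFun (vecMul_injective_of_isUnit ((isUnit_iff_isUnit_det _).2 hF) hvec) j

theorem aeval_injective_of_isUnit_det_jacobian [CommRing R] [IsAddTorsionFree R] [Fintype σ]
    [DecidableEq σ] {F : σ → MvPolynomial σ R} (hF : IsUnit (jacobian F).det) :
    Function.Injective (aeval (R := R) F) := by
  refine (injective_iff_map_eq_zero (aeval (R := R) F)).2 fun p hp => ?_
  induction hd : p.totalDegree using Nat.strong_induction_on generalizing p with
  | _ d ih =>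
    have hpderiv : ∀ j, pderiv j p = 0 := fun j => by
      by_contra hne
      exact hne (ih _ (hd ▸ totalDegree_pderiv_lt hne) _
        (aeval_pderiv_eq_zero_of_isUnit_det_jacobian hF hp j) rfl)
    rw [eq_C_of_forall_pderiv_eq_zero hpderiv] at hp ⊢
    rwa [aeval_C, algebraMap_eq] at hp

theorem exists_aeval_eq_zero_of_not_isUnit {k K : Type*} [Field k] [Field K] [Algebra k K]
    [IsAlgClosed K] [Finite σ] {p : MvPolynomial σ k} (hp : ¬IsUnit p) :
    ∃ x : σ → K, aeval x p = 0 := by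
  obtain ⟨M, hM, hpM⟩ := Ideal.exists_le_maximal (Ideal.span {p})
    (by rwa [Ne, Ideal.span_singleton_eq_top])
  obtain ⟨x, rfl⟩ := eq_vanishingIdeal_singleton_of_isMaximal K hM
  exact ⟨x, (mem_vanishingIdeal_singleton_iff x p).1 (hpM (Ideal.mem_span_singleton_self p))⟩

end MvPolynomial

theorem stmt7 {n : ℕ} (F : Fin n → MvPolynomial (Fin n) ℂ) (hF : IsKeller F)
    (h : MvPolynomial (Fin n) ℂ) (hh : ∀ c : ℂ, h ≠ C c) :
    ∃ x : Fin n → ℂ, eval (fun i => eval x (F i)) h = 0 := by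
  have hinj := aeval_injective_of_isUnit_det_jacobian (F := F) (hF ▸ isUnit_one)
  have hcomp : ¬IsUnit (aeval F h) := fun hu => by
    obtain ⟨r, -, hr⟩ := isUnit_iff_eq_C_of_isReduced.1 hu
    exact hh r (hinj (by rw [hr, aeval_C, algebraMap_eq]))
  obtain ⟨x, hx⟩ := exists_aeval_eq_zero_of_not_isUnit (K := ℂ) hcomp
  refine ⟨x, ?_⟩
  rw [aeval_eq_bind₁, aeval_bind₁] at hx
  exact hx
end

section
/- Let K be an algebraic number field with ring of integers O_K and let F ∈ O_K[X₁,...,Xₙ]ⁿ be a Keller map with F(0) = 0. If G ∈ K[X₁,...,Xₙ]ⁿ satisfies G(0) = 0, Fᵢ(G₁,...,Gₙ) = Xᵢ and Gᵢ(F₁,...,Fₙ) = Xᵢ for all i, then all coefficients of G₁,...,Gₙ lie in O_K. -/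
/-!
Write `L` for the linear part of `F`. Since `G(0) = 0`, a monomial of degree `≥ 2` evaluated at
`G` has its coefficients of degree `d` determined by coefficients of `G` of degree `< d`, so
comparing coefficients of degree `d` in `F(G) = X` expresses `L` applied to the degree-`d`
coefficients of `G` through lower-degree ones, over `𝓞 K`. The Keller condition at the origin
gives `det L = 1`, so `L` is invertible over `𝓞 K`, and induction on `d` finishes the proof.
-/

open MvPolynomial NumberField

namespace MvPolynomial

section LowCoeff

variable {σ R : Type*} [CommRing R]

def lowCoeffSubring (A : Subring R) (d : ℕ) : Subring (MvPolynomial σ R) where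
  carrier := {p | ∀ m : σ →₀ ℕ, m.degree < d → coeff m p ∈ A}
  zero_mem' _ _ := by simp [A.zero_mem]
  one_mem' m _ := by
    classical
    rw [coeff_one]
    split_ifs
    exacts [A.one_mem, A.zero_mem]
  add_mem' hp hq m hm := by simpa using A.add_mem (hp m hm) (hq m hm)
  neg_mem' hp m hm := by simpa using A.neg_mem (hp m hm)
  mul_mem' {p q} hp hq m hm := by
    classical
    rw [coeff_mul]
    refine A.sum_mem fun ⟨a, b⟩ hab => ?_
    obtain rfl : a + b = m := Finset.HasAntidiagonal.mem_antidiagonal.mp hab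
    rw [map_add] at hm
    exact A.mul_mem (hp a (by omega)) (hq b (by omega))

variable {A : Subring R} {d : ℕ}

theorem C_mem_lowCoeffSubring {a : R} (ha : a ∈ A) : C a ∈ lowCoeffSubring (σ := σ) A d := by
  classical
  intro m _
  rw [coeff_C]
  split_ifs
  exacts [ha, A.zero_mem]

theorem X_mem_lowCoeffSubring (i : σ) : X i ∈ lowCoeffSubring A d := by
  classical
  intro m _
  rw [coeff_X]
  split_ifs
  exacts [A.one_mem, A.zero_mem]

-- Without constant terms, a coefficient of degree `d` of `p * q` only involves coefficients
-- of degree `< d` of the factors.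
theorem mul_mem_lowCoeffSubring_succ {p q : MvPolynomial σ R} (hp : p ∈ lowCoeffSubring A d)
    (hq : q ∈ lowCoeffSubring A d) (hp0 : constantCoeff p = 0) (hq0 : constantCoeff q = 0) :
    p * q ∈ lowCoeffSubring A (d + 1) := by
  classical
  intro m hm
  rw [coeff_mul]
  refine A.sum_mem fun ⟨a, b⟩ hab => ?_
  rcases eq_or_ne a 0 with rfl | ha
  · simp [← constantCoeff_eq, hp0, A.zero_mem]
  rcases eq_or_ne b 0 with rfl | hb
  · simp [← constantCoeff_eq, hq0, A.zero_mem]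
  obtain rfl : a + b = m := Finset.HasAntidiagonal.mem_antidiagonal.mp hab
  rw [map_add] at hm
  have ha' := mt (Finsupp.degree_eq_zero_iff a).mp ha
  have hb' := mt (Finsupp.degree_eq_zero_iff b).mp hb
  exact A.mul_mem (hp a (by omega)) (hq b (by omega))

theorem constantCoeff_aeval {τ : Type*} {G : σ → MvPolynomial τ R}
    (hG0 : ∀ j, constantCoeff (G j) = 0) (p : MvPolynomial σ R) :
    constantCoeff (aeval G p) = constantCoeff p := by
  induction p using MvPolynomial.induction_on with
  | C a => simp
  | add p q hp hq => rw [map_add, map_add, hp, hq, map_add]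
  | mul_X p j hp => simp [hG0]

variable {G : σ → MvPolynomial σ R}

theorem aeval_monomial_mem_lowCoeffSubring (hG : ∀ j, G j ∈ lowCoeffSubring A d)
    (u : σ →₀ ℕ) {c : R} (hc : c ∈ A) :
    aeval G (monomial u c) ∈ lowCoeffSubring A d := by
  rw [aeval_monomial, algebraMap_eq]
  exact mul_mem (C_mem_lowCoeffSubring hc) (prod_mem fun j _ => pow_mem (hG j) _)

theorem aeval_monomial_mem_lowCoeffSubring_succ (hG : ∀ j, G j ∈ lowCoeffSubring A d)
    (hG0 : ∀ j, constantCoeff (G j) = 0) {u : σ →₀ ℕ}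
    (hu : ∀ j, u ≠ Finsupp.single j 1) {c : R} (hc : c ∈ A) :
    aeval G (monomial u c) ∈ lowCoeffSubring A (d + 1) := by
  classical
  rcases eq_or_ne u 0 with rfl | hu0
  · simpa using C_mem_lowCoeffSubring hc
  obtain ⟨j, hj⟩ := Finsupp.ne_iff.mp hu0
  set v := u - Finsupp.single j 1
  have huv : u = v + Finsupp.single j 1 :=
    (tsub_add_cancel_of_le (Finsupp.single_le_iff.mpr (Nat.one_le_iff_ne_zero.mpr hj))).symm
  have hv0 : v ≠ 0 := fun h => hu j (by rw [huv, h, zero_add])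
  rw [huv, monomial_add_single, pow_one, map_mul, aeval_X]
  refine mul_mem_lowCoeffSubring_succ (aeval_monomial_mem_lowCoeffSubring hG v hc) (hG j) ?_ (hG0 j)
  rw [constantCoeff_aeval hG0, constantCoeff_monomial, if_neg hv0]

theorem aeval_mem_lowCoeffSubring_succ (hG : ∀ j, G j ∈ lowCoeffSubring A d)
    (hG0 : ∀ j, constantCoeff (G j) = 0) {Q : MvPolynomial σ R} (hQ : ∀ u, coeff u Q ∈ A)
    (hQ1 : ∀ j, coeff (Finsupp.single j 1) Q = 0) : aeval G Q ∈ lowCoeffSubring A (d + 1) := by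
  rw [Q.as_sum, map_sum]
  refine sum_mem fun u _ => ?_
  by_cases hu : ∃ j, u = Finsupp.single j 1
  · obtain ⟨j, rfl⟩ := hu
    simp [hQ1]
  · exact aeval_monomial_mem_lowCoeffSubring_succ hG hG0 (not_exists.mp hu) (hQ u)

theorem aeval_sub_linear_mem_lowCoeffSubring_succ [Fintype σ]
    (hG : ∀ j, G j ∈ lowCoeffSubring A d) (hG0 : ∀ j, constantCoeff (G j) = 0)
    {P : MvPolynomial σ R} (hP : ∀ u, coeff u P ∈ A) :
    aeval G P - ∑ j, C (coeff (Finsupp.single j 1) P) * G j ∈ lowCoeffSubring A (d + 1) := by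
  classical
  set Q := P - ∑ j, C (coeff (Finsupp.single j 1) P) * X j
  have hQ : aeval G Q = aeval G P - ∑ j, C (coeff (Finsupp.single j 1) P) * G j := by
    simp [Q, map_sum]
  rw [← hQ]
  refine aeval_mem_lowCoeffSubring_succ hG hG0 (fun u => ?_) (fun j => ?_)
  · simp only [Q, coeff_sub, coeff_sum, coeff_C_mul, coeff_X]
    refine sub_mem (hP u) (sum_mem fun j _ => mul_mem (hP _) ?_)
    split_ifs
    exacts [A.one_mem, A.zero_mem]
  · simp only [Q, coeff_sub, coeff_sum, coeff_C_mul, coeff_X, Finsupp.single_left_inj one_ne_zero]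
    simp

end LowCoeff

theorem constantCoeff_pderiv {σ R : Type*} [CommRing R] (j : σ) (p : MvPolynomial σ R) :
    constantCoeff (pderiv j p) = coeff (Finsupp.single j 1) p := by
  simp [constantCoeff_eq, coeff_pderiv]

end MvPolynomial

theorem Matrix.mem_of_mulVec_mem {ι S : Type*} [Fintype ι] [DecidableEq ι] [CommRing S]
    {T : Subring S} {N M : Matrix ι ι S} (hNM : N * M = 1) (hN : ∀ i j, N i j ∈ T)
    {v : ι → S} (hv : ∀ i, M.mulVec v i ∈ T) (i : ι) : v i ∈ T := by
  rw [← Matrix.one_mulVec v, ← hNM, ← Matrix.mulVec_mulVec]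
  exact sum_mem fun j _ => mul_mem (hN i j) (hv j)

/-- The Jacobian matrix of `F` at the origin. -/
noncomputable def linearPart {σ R : Type*} [CommRing R] (F : σ → MvPolynomial σ R) :
    Matrix σ σ R :=
  Matrix.of fun i j => coeff (Finsupp.single j 1) (F i)

theorem IsKeller.det_linearPart {R : Type*} [CommRing R] {n : ℕ}
    {F : Fin n → MvPolynomial (Fin n) R} (hF : IsKeller F) : (linearPart F).det = 1 := by
  calc (linearPart F).det = constantCoeff (Matrix.of fun i j => pderiv j (F i)).det := by
        rw [RingHom.map_det]
        congr 1
        ext i j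
        simp [linearPart, constantCoeff_pderiv]
    _ = 1 := by rw [hF, map_one]

theorem coeff_mem_range_of_aeval_eq_X {σ R K : Type*} [Fintype σ] [DecidableEq σ] [CommRing R]
    [CommRing K] (f : R →+* K) {F : σ → MvPolynomial σ R} (hF : IsUnit (linearPart F).det)
    {G : σ → MvPolynomial σ K} (hG0 : ∀ i, constantCoeff (G i) = 0)
    (hFG : ∀ i, aeval G (map f (F i)) = X i) (i : σ) (m : σ →₀ ℕ) :
    coeff m (G i) ∈ f.range := by
  suffices ∀ d i, G i ∈ lowCoeffSubring f.range d from
    this (m.degree + 1) i m m.degree.lt_succ_self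
  intro d
  induction d with
  | zero => exact fun _ _ hm => absurd hm (Nat.not_lt_zero _)
  | succ d ih =>
    let φ : R →+* MvPolynomial σ K := C.comp f
    refine Matrix.mem_of_mulVec_mem (N := (linearPart F)⁻¹.map φ) (M := (linearPart F).map φ)
      ?_ (fun _ _ => C_mem_lowCoeffSubring (f.mem_range_self _)) (fun i => ?_)
    · rw [← Matrix.map_mul, Matrix.nonsing_inv_mul _ hF, Matrix.map_one _ φ.map_zero φ.map_one]
    have hlin := aeval_sub_linear_mem_lowCoeffSubring_succ ih hG0 (P := map f (F i))
      (fun u => by rw [coeff_map]; exact f.mem_range_self _)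
    rw [hFG i] at hlin
    convert sub_mem (X_mem_lowCoeffSubring i) hlin using 1
    simp [Matrix.mulVec, dotProduct, linearPart, φ, coeff_map]

theorem stmt10_general (K : Type*) [Field K] {n : ℕ}
    (F : Fin n → MvPolynomial (Fin n) (𝓞 K)) (hF : IsKeller F)
    (G : Fin n → MvPolynomial (Fin n) K)
    (hG0 : ∀ i, eval (0 : Fin n → K) (G i) = 0)
    (hFG : ∀ i, aeval G (map (algebraMap (𝓞 K) K) (F i)) = X i) :
    ∀ i m, (G i).coeff m ∈ (algebraMap (𝓞 K) K).range :=
  coeff_mem_range_of_aeval_eq_X _ (hF.det_linearPart ▸ isUnit_one)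
    (fun i => by rw [← eval_zero]; exact hG0 i) hFG

theorem stmt10 (K : Type*) [Field K] [NumberField K] {n : ℕ}
    (F : Fin n → MvPolynomial (Fin n) (𝓞 K)) (hF : IsKeller F)
    (hF0 : ∀ i, eval (0 : Fin n → 𝓞 K) (F i) = 0)
    (G : Fin n → MvPolynomial (Fin n) K)
    (hG0 : ∀ i, eval (0 : Fin n → K) (G i) = 0)
    (hFG : ∀ i, aeval G (map (algebraMap (𝓞 K) K) (F i)) = X i)
    (hGF : ∀ i, aeval (fun j => map (algebraMap (𝓞 K) K) (F j)) (G i) = X i) :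
    ∀ i m, (G i).coeff m ∈ (algebraMap (𝓞 K) K).range :=
  stmt10_general K F hF G hG0 hFG
end
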